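/- Let X ∈ ℝ^{m×D}, G = XXᵀ, and λ > 0. Let γ ≥ 0 be such that ⟨v, G v⟩ ≥ γ ‖v‖² for every v ∈ col(X) and ⟨w, XᵀX w⟩ ≥ γ ‖w‖² for every w in the range of Xᵀ. Let Ŵ ∈ ℝ^D lie in the range of Xᵀ, let q ∈ ℝ^m be arbitrary, and let P : ℝ^m → ℝ^m denote the orthogonal projection onto col(X). Then for every φ ∈ ℝ^D with ‖φ‖ ≤ 1: |⟨φ, Ŵ⟩ − (Xφ)ᵀ (G + λ I)⁻¹ q| ≤ ‖P(q − X Ŵ)‖ / √(γ + λ) + (λ / (γ + λ)) ‖Ŵ‖. -/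
import Mathlib

open Matrix

private lemma dot_self_nonneg' {n : ℕ} (v : Fin n → ℝ) : 0 ≤ v ⬝ᵥ v :=
  Finset.sum_nonneg fun i _ => mul_self_nonneg _

private lemma dot_cs' {n : ℕ} (v w : Fin n → ℝ) :
    |v ⬝ᵥ w| ≤ Real.sqrt (v ⬝ᵥ v) * Real.sqrt (w ⬝ᵥ w) := by
  have h := Finset.sum_mul_sq_le_sq_mul_sq Finset.univ v w
  have h1 : (v ⬝ᵥ w) ^ 2 ≤ (v ⬝ᵥ v) * (w ⬝ᵥ w) := by
    simpa [dotProduct, sq] using h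
  calc |v ⬝ᵥ w| = Real.sqrt ((v ⬝ᵥ w) ^ 2) := (Real.sqrt_sq_eq_abs _).symm
    _ ≤ Real.sqrt ((v ⬝ᵥ v) * (w ⬝ᵥ w)) := Real.sqrt_le_sqrt h1
    _ = _ := Real.sqrt_mul (dot_self_nonneg' v) _

private lemma posdef_aux {k : ℕ} (Y : Matrix (Fin k) (Fin k) ℝ) (hY : Y.PosSemidef)
    (lam : ℝ) (hlam : 0 < lam) : (Y + lam • (1 : Matrix (Fin k) (Fin k) ℝ)).PosDef := by
  refine Matrix.PosDef.posSemidef_add hY ?_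
  rw [smul_one_eq_diagonal]
  exact posDef_diagonal_iff.mpr fun _ => hlam

set_option maxHeartbeats 1000000 in
/-- Assembled aggregation-distortion bound (core of Theorem 2): with `G = XXᵀ`,
`γ` a lower bound on the positive spectrum of `G` (stated on `col(X)` and on the
range of `Xᵀ`), `Ŵ` in the range of `Xᵀ`, and `p` the orthogonal projection of
`q - XŴ` onto `col(X)`, every unit query `φ` satisfies
`|⟨φ, Ŵ⟩ - (Xφ)ᵀ (G+λI)⁻¹ q| ≤ ‖p‖/√(γ+λ) + (λ/(γ+λ))‖Ŵ‖`. -/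
theorem stmt16 {m D : ℕ} (X : Matrix (Fin m) (Fin D) ℝ)
    (G : Matrix (Fin m) (Fin m) ℝ) (hG : G = X * Xᵀ)
    (lam : ℝ) (hlam : 0 < lam) (γ : ℝ) (hγ : 0 ≤ γ)
    (hrangeG : ∀ v ∈ LinearMap.range X.mulVecLin, γ * (v ⬝ᵥ v) ≤ v ⬝ᵥ (G *ᵥ v))
    (hrangeXtX : ∀ w ∈ LinearMap.range Xᵀ.mulVecLin,
      γ * (w ⬝ᵥ w) ≤ w ⬝ᵥ ((Xᵀ * X) *ᵥ w))
    (What : Fin D → ℝ) (hWhat : What ∈ LinearMap.range Xᵀ.mulVecLin)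
    (q : Fin m → ℝ)
    (p : Fin m → ℝ)
    (hp : p ∈ LinearMap.range X.mulVecLin)
    (hperp : ∀ v ∈ LinearMap.range X.mulVecLin, (q - X *ᵥ What - p) ⬝ᵥ v = 0) :
    ∀ φ : Fin D → ℝ, Real.sqrt (φ ⬝ᵥ φ) ≤ 1 →
      |φ ⬝ᵥ What -
          (X *ᵥ φ) ⬝ᵥ ((G + lam • (1 : Matrix (Fin m) (Fin m) ℝ))⁻¹ *ᵥ q)| ≤
        Real.sqrt (p ⬝ᵥ p) / Real.sqrt (γ + lam) +
          (lam / (γ + lam)) * Real.sqrt (What ⬝ᵥ What) := by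
  intro φ hφ
  have hγl : 0 < γ + lam := by linarith
  set A := G + lam • (1 : Matrix (Fin m) (Fin m) ℝ) with hAdef
  set B := Xᵀ * X + lam • (1 : Matrix (Fin D) (Fin D) ℝ) with hBdef
  -- positive definiteness and invertibility
  have hXXt : (X * Xᵀ).PosSemidef := by
    simpa [conjTranspose_eq_transpose_of_trivial] using X.posSemidef_self_mul_conjTranspose
  have hXtX : (Xᵀ * X).PosSemidef := by
    simpa [conjTranspose_eq_transpose_of_trivial] using X.posSemidef_conjTranspose_mul_self
  have hA : A.PosDef := by rw [hAdef, hG]; exact posdef_aux _ hXXt lam hlam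
  have hB : B.PosDef := posdef_aux _ hXtX lam hlam
  have hAdet : IsUnit A.det := (Matrix.isUnit_iff_isUnit_det A).1 hA.isUnit
  have hBdet : IsUnit B.det := (Matrix.isUnit_iff_isUnit_det B).1 hB.isUnit
  have hAA : A * A⁻¹ = 1 := Matrix.mul_nonsing_inv A hAdet
  have hA'A : A⁻¹ * A = 1 := Matrix.nonsing_inv_mul A hAdet
  have hBB : B * B⁻¹ = 1 := Matrix.mul_nonsing_inv B hBdet
  have hB'B : B⁻¹ * B = 1 := Matrix.nonsing_inv_mul B hBdet
  -- symmetry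
  have hAsymm : Aᵀ = A := by
    have := hA.isHermitian
    rwa [IsHermitian, conjTranspose_eq_transpose_of_trivial] at this
  have hBsymm : Bᵀ = B := by
    have := hB.isHermitian
    rwa [IsHermitian, conjTranspose_eq_transpose_of_trivial] at this
  have hAinvsymm : (A⁻¹)ᵀ = A⁻¹ := by rw [Matrix.transpose_nonsing_inv, hAsymm]
  -- push-through identities
  have hcomm : A * X = X * B := by
    rw [hAdef, hBdef, hG, Matrix.add_mul, Matrix.mul_add, Matrix.smul_mul, Matrix.mul_smul,
      Matrix.one_mul, Matrix.mul_one, Matrix.mul_assoc]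
  have hAX : A⁻¹ * X = X * B⁻¹ := by
    have h1 : A⁻¹ * (A * X) * B⁻¹ = A⁻¹ * (X * B) * B⁻¹ := by rw [hcomm]
    have h2 : A⁻¹ * (A * X) * B⁻¹ = X * B⁻¹ := by
      rw [← Matrix.mul_assoc A⁻¹ A X, hA'A, Matrix.one_mul]
    have h3 : A⁻¹ * (X * B) * B⁻¹ = A⁻¹ * X := by
      rw [← Matrix.mul_assoc A⁻¹ X B, Matrix.mul_assoc (A⁻¹ * X) B B⁻¹, hBB, Matrix.mul_one]
    rw [← h3, ← h1, h2]
  have hXA : Xᵀ * A⁻¹ = B⁻¹ * Xᵀ := by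
    have h1 := congrArg Matrix.transpose hAX
    rw [Matrix.transpose_mul, Matrix.transpose_mul, hAinvsymm,
      Matrix.transpose_nonsing_inv, hBsymm] at h1
    exact h1
  -- basic dot transpose tool
  have dtr : ∀ (v : Fin m → ℝ) (u : Fin D → ℝ), v ⬝ᵥ (X *ᵥ u) = (Xᵀ *ᵥ v) ⬝ᵥ u := by
    intro v u
    rw [dotProduct_mulVec, mulVec_transpose]
  -- residual
  set r : Fin m → ℝ := q - X *ᵥ What - p with hrdef
  have hXtr : Xᵀ *ᵥ r = 0 := by
    have h0 : r ⬝ᵥ (X *ᵥ (Xᵀ *ᵥ r)) = 0 := hperp _ ⟨Xᵀ *ᵥ r, rfl⟩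
    rw [dtr] at h0
    exact dotProduct_self_eq_zero.1 h0
  have hAr : A⁻¹ *ᵥ r = lam⁻¹ • r := by
    have h1 : A *ᵥ r = lam • r := by
      rw [hAdef, hG, Matrix.add_mulVec, ← Matrix.mulVec_mulVec, hXtr, Matrix.mulVec_zero,
        smul_mulVec, Matrix.one_mulVec, zero_add]
    have h2 : A⁻¹ *ᵥ (A *ᵥ r) = r := by
      rw [Matrix.mulVec_mulVec, hA'A, Matrix.one_mulVec]
    rw [h1, mulVec_smul] at h2
    calc A⁻¹ *ᵥ r = lam⁻¹ • (lam • (A⁻¹ *ᵥ r)) := by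
          rw [smul_smul, inv_mul_cancel₀ hlam.ne', one_smul]
      _ = lam⁻¹ • r := by rw [h2]
  have hq : q = (X *ᵥ What + p) + r := by rw [hrdef]; abel
  -- decompose prediction
  have hrterm : (X *ᵥ φ) ⬝ᵥ (A⁻¹ *ᵥ r) = 0 := by
    have h0 : r ⬝ᵥ (X *ᵥ φ) = 0 := hperp _ ⟨φ, rfl⟩
    rw [hAr, dotProduct_smul, dotProduct_comm, h0, smul_zero]
  -- Term with What
  set w : Fin D → ℝ := B⁻¹ *ᵥ What with hwdef
  have hT1 : (X *ᵥ φ) ⬝ᵥ (A⁻¹ *ᵥ (X *ᵥ What)) = φ ⬝ᵥ ((B⁻¹ * (Xᵀ * X)) *ᵥ What) := by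
    rw [dotProduct_comm, dtr, Matrix.mulVec_mulVec, Matrix.mulVec_mulVec, hXA,
      Matrix.mul_assoc, dotProduct_comm]
  have hBinv1 : (1 : Matrix (Fin D) (Fin D) ℝ) - B⁻¹ * (Xᵀ * X) = lam • B⁻¹ := by
    have : B⁻¹ * B = B⁻¹ * (Xᵀ * X) + lam • B⁻¹ := by
      rw [hBdef, Matrix.mul_add, Matrix.mul_smul, Matrix.mul_one]
    rw [hB'B] at this
    rw [this]; abel
  have key1 : φ ⬝ᵥ What - φ ⬝ᵥ ((B⁻¹ * (Xᵀ * X)) *ᵥ What) = lam * (φ ⬝ᵥ w) := by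
    have h1 : What - (B⁻¹ * (Xᵀ * X)) *ᵥ What = lam • w := by
      have := congrArg (fun M => M *ᵥ What) hBinv1
      simpa [Matrix.sub_mulVec, Matrix.one_mulVec, smul_mulVec, hwdef] using this
    rw [← dotProduct_sub, h1, dotProduct_smul, smul_eq_mul]
  -- bound on w
  obtain ⟨y, hy⟩ := hWhat
  have hy' : Xᵀ *ᵥ y = What := hy
  have hw_eq : w = Xᵀ *ᵥ (A⁻¹ *ᵥ y) := by
    rw [hwdef, ← hy', Matrix.mulVec_mulVec, Matrix.mulVec_mulVec, hXA]
  have hwrange : w ∈ LinearMap.range Xᵀ.mulVecLin := ⟨A⁻¹ *ᵥ y, hw_eq.symm⟩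
  have h2 := hrangeXtX w hwrange
  have hBw : w ⬝ᵥ (B *ᵥ w) = w ⬝ᵥ What := by
    rw [hwdef, Matrix.mulVec_mulVec, hBB, Matrix.one_mulVec]
  have hBw2 : w ⬝ᵥ (B *ᵥ w) = w ⬝ᵥ ((Xᵀ * X) *ᵥ w) + lam * (w ⬝ᵥ w) := by
    rw [hBdef, Matrix.add_mulVec, dotProduct_add, smul_mulVec, Matrix.one_mulVec,
      dotProduct_smul, smul_eq_mul]
  set a := Real.sqrt (w ⬝ᵥ w) with hadef
  set WW := Real.sqrt (What ⬝ᵥ What) with hWWdef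
  have ha2 : a ^ 2 = w ⬝ᵥ w := Real.sq_sqrt (dot_self_nonneg' w)
  have hkey : (γ + lam) * a ^ 2 ≤ a * WW := by
    have hcs : w ⬝ᵥ What ≤ a * WW := (abs_le.1 (dot_cs' w What)).2
    nlinarith [hBw, hBw2, h2]
  have haw : a ≤ WW / (γ + lam) := by
    rcases eq_or_lt_of_le (Real.sqrt_nonneg (w ⬝ᵥ w)) with h0 | h0
    · rw [← hadef] at h0
      rw [← h0]
      positivity
    · rw [← hadef] at h0
      rw [le_div_iff₀ hγl]
      have : (a * (γ + lam)) * a ≤ WW * a := by nlinarith [hkey]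
      exact le_of_mul_le_mul_right this h0
  -- Term with p
  set z : Fin m → ℝ := A⁻¹ *ᵥ (X *ᵥ φ) with hzdef
  have hzp : (X *ᵥ φ) ⬝ᵥ (A⁻¹ *ᵥ p) = z ⬝ᵥ p := by
    rw [dotProduct_mulVec, ← hAinvsymm, vecMul_transpose, hzdef]
  set c : Fin D → ℝ := B⁻¹ *ᵥ φ with hcdef
  have hz_eq : z = X *ᵥ c := by
    rw [hzdef, hcdef, Matrix.mulVec_mulVec, Matrix.mulVec_mulVec, hAX]
  have hGz := hrangeG z ⟨c, hz_eq.symm⟩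
  have hAz : z ⬝ᵥ (A *ᵥ z) = z ⬝ᵥ (X *ᵥ φ) := by
    rw [hzdef, Matrix.mulVec_mulVec, Matrix.mulVec_mulVec, ← Matrix.mul_assoc, hAA,
      Matrix.one_mul]
  have hAz2 : z ⬝ᵥ (A *ᵥ z) = z ⬝ᵥ (G *ᵥ z) + lam * (z ⬝ᵥ z) := by
    rw [hAdef, Matrix.add_mulVec, dotProduct_add, smul_mulVec, Matrix.one_mulVec,
      dotProduct_smul, smul_eq_mul]
  -- z ⬝ᵥ (X *ᵥ φ) ≤ 1
  set u : Fin D → ℝ := (Xᵀ * X) *ᵥ c with hudef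
  have hφc : φ = u + lam • c := by
    have h1 : B *ᵥ c = φ := by rw [hcdef, Matrix.mulVec_mulVec, hBB, Matrix.one_mulVec]
    rw [← h1, hBdef, Matrix.add_mulVec, smul_mulVec, Matrix.one_mulVec, hudef]
  have huc : 0 ≤ u ⬝ᵥ c := by
    have : u ⬝ᵥ c = (X *ᵥ c) ⬝ᵥ (X *ᵥ c) := by
      rw [dtr, Matrix.mulVec_mulVec, hudef]
    rw [this]
    exact dot_self_nonneg' _
  have hφφ : φ ⬝ᵥ φ ≤ 1 := by
    have h1 : φ ⬝ᵥ φ = Real.sqrt (φ ⬝ᵥ φ) ^ 2 := (Real.sq_sqrt (dot_self_nonneg' φ)).symm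
    rw [h1]
    nlinarith [Real.sqrt_nonneg (φ ⬝ᵥ φ)]
  have hXtz : Xᵀ *ᵥ z = u := by rw [hz_eq, Matrix.mulVec_mulVec, hudef]
  have hle1 : z ⬝ᵥ (X *ᵥ φ) ≤ 1 := by
    have h1 : z ⬝ᵥ (X *ᵥ φ) = u ⬝ᵥ φ := by rw [dtr, hXtz]
    have h2' : u ⬝ᵥ φ = u ⬝ᵥ u + lam * (u ⬝ᵥ c) := by
      rw [hφc, dotProduct_add, dotProduct_smul, smul_eq_mul]
    have hexp : φ ⬝ᵥ φ = u ⬝ᵥ u + 2 * lam * (u ⬝ᵥ c) + lam ^ 2 * (c ⬝ᵥ c) := by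
      conv_lhs => rw [hφc]
      rw [dotProduct_add, add_dotProduct, add_dotProduct, dotProduct_smul, smul_dotProduct,
        smul_dotProduct, dotProduct_smul, dotProduct_comm c u]
      simp only [smul_eq_mul]
      ring
    have hcc := dot_self_nonneg' c
    rw [h1, h2']
    nlinarith [hφφ, huc, hcc, hlam]
  -- norm bound on z
  have hzz : z ⬝ᵥ z ≤ 1 / (γ + lam) := by
    rw [le_div_iff₀ hγl]
    nlinarith [hGz, hAz, hAz2, hle1]
  set b := Real.sqrt (z ⬝ᵥ z) with hbdef
  have hb : b ≤ 1 / Real.sqrt (γ + lam) := by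
    rw [hbdef, one_div, ← Real.sqrt_inv, ← one_div]
    exact Real.sqrt_le_sqrt hzz
  -- assembly
  have hpred : (X *ᵥ φ) ⬝ᵥ (A⁻¹ *ᵥ q) = φ ⬝ᵥ ((B⁻¹ * (Xᵀ * X)) *ᵥ What) + z ⬝ᵥ p := by
    conv_lhs => rw [hq]
    rw [Matrix.mulVec_add, Matrix.mulVec_add, dotProduct_add, dotProduct_add, hrterm,
      add_zero, hT1, hzp]
  have heq : φ ⬝ᵥ What - (X *ᵥ φ) ⬝ᵥ (A⁻¹ *ᵥ q) = lam * (φ ⬝ᵥ w) - z ⬝ᵥ p := by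
    rw [hpred]
    linarith [key1]
  have h3 : |lam * (φ ⬝ᵥ w) - z ⬝ᵥ p| ≤ lam * |φ ⬝ᵥ w| + |z ⬝ᵥ p| := by
    have := abs_add_le (lam * (φ ⬝ᵥ w)) (-(z ⬝ᵥ p))
    simpa [sub_eq_add_neg, abs_mul, abs_of_pos hlam] using this
  have hb1 : |φ ⬝ᵥ w| ≤ WW / (γ + lam) := by
    calc |φ ⬝ᵥ w| ≤ Real.sqrt (φ ⬝ᵥ φ) * a := dot_cs' φ w
      _ ≤ 1 * a := mul_le_mul_of_nonneg_right hφ (Real.sqrt_nonneg _)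
      _ = a := one_mul a
      _ ≤ WW / (γ + lam) := haw
  have hb2 : |z ⬝ᵥ p| ≤ Real.sqrt (p ⬝ᵥ p) / Real.sqrt (γ + lam) := by
    calc |z ⬝ᵥ p| ≤ b * Real.sqrt (p ⬝ᵥ p) := dot_cs' z p
      _ ≤ (1 / Real.sqrt (γ + lam)) * Real.sqrt (p ⬝ᵥ p) :=
          mul_le_mul_of_nonneg_right hb (Real.sqrt_nonneg _)
      _ = Real.sqrt (p ⬝ᵥ p) / Real.sqrt (γ + lam) := by ring
  have h4 : lam * |φ ⬝ᵥ w| ≤ lam / (γ + lam) * WW := by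
    calc lam * |φ ⬝ᵥ w| ≤ lam * (WW / (γ + lam)) := mul_le_mul_of_nonneg_left hb1 hlam.le
      _ = lam / (γ + lam) * WW := by ring
  rw [heq]
  calc |lam * (φ ⬝ᵥ w) - z ⬝ᵥ p| ≤ lam * |φ ⬝ᵥ w| + |z ⬝ᵥ p| := h3
    _ ≤ Real.sqrt (p ⬝ᵥ p) / Real.sqrt (γ + lam) + lam / (γ + lam) * WW := by linarith
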